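/- For a node i in the associated tree T with neighbors j_1,…,j_n, the loop cutset L is partitioned as the disjoint union of the relevant set R_i = ∪_m R_{i,j_m} and the sets L_{j_1∖i},…,L_{j_n∖i}. -/

import Mathlib

open scoped Classical

/-- The product of edge potentials `Ψ k l (x k) (x l)` over the edges `{k,l}` of `G`
both of whose endpoints lie in the vertex set `C` (each unordered edge is represented
once, by the ordered pair with `k < l`). -/
noncomputable def edgeProd {V 𝒳 : Type} [Fintype V] [LinearOrder V]
    (G : SimpleGraph V) (C : Set V) (Ψ : V → V → 𝒳 → 𝒳 → ℝ) (x : V → 𝒳) : ℝ :=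
  ∏ p ∈ Finset.univ.filter
      (fun p : V × V => G.Adj p.1 p.2 ∧ p.1 < p.2 ∧ p.1 ∈ C ∧ p.2 ∈ C),
    Ψ p.1 p.2 (x p.1) (x p.2)

/-- The belief at node `i` with respect to the Gibbs distribution induced on the
subgraph of `G` spanned by the vertex set `C`:
`Z_i^C(x_i) = Φ_i(x_i) * Σ_{x_{C∖i}} ∏_{{k,l}∈E(C)} Ψ_{kl}(x_k,x_l) ∏_{k∈C,k≠i} Φ_k(x_k)`.
Configurations are represented as functions `x : V → 𝒳` frozen to a default value `x0`
outside of `C`, so that the sum ranges exactly over configurations on `C` with `x i = xi`. -/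
noncomputable def belief {V 𝒳 : Type} [Fintype V] [LinearOrder V] [Fintype 𝒳]
    (G : SimpleGraph V) (C : Set V) (Φ : V → 𝒳 → ℝ) (Ψ : V → V → 𝒳 → 𝒳 → ℝ)
    (x0 : 𝒳) (i : V) (xi : 𝒳) : ℝ :=
  Φ i xi *
    ∑ x ∈ Finset.univ.filter
        (fun x : V → 𝒳 => x i = xi ∧ ∀ v, v ∉ C → x v = x0),
      edgeProd G C Ψ x *
        ∏ v ∈ Finset.univ.filter (fun v => v ∈ C ∧ v ≠ i), Φ v (x v)

/-- The component `G_{a∖b}` of `G` with the edge `{a,b}` removed that contains `a`. -/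
def compSet {V : Type} (G : SimpleGraph V) (a b : V) : Set V :=
  {w | (G.deleteEdges {s(a, b)}).Reachable a w}

/-- The Belief Propagation message from `j` to `i`:
`m_{j→i}(x_i) = Σ_{x_j} Ψ_{ji}(x_j, x_i) Z_j^{j∖i}(x_j)`, where `Z_j^{j∖i}` is the belief
at `j` on the component of `G ∖ {i,j}` containing `j`. -/
noncomputable def msg {V 𝒳 : Type} [Fintype V] [LinearOrder V] [Fintype 𝒳]
    (G : SimpleGraph V) (Φ : V → 𝒳 → ℝ) (Ψ : V → V → 𝒳 → 𝒳 → ℝ)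
    (x0 : 𝒳) (j i : V) (xi : 𝒳) : ℝ :=
  ∑ xj : 𝒳, Ψ j i xj xi * belief G (compSet G j i) Φ Ψ x0 j xj

/-! ### Local Conditioning on an associated tree

`T` is the associated tree (on vertex type `W`) for the loop cutset `L ⊆ V` of an
original graph; `π : W → V` sends each tree node to the original node it is a copy of. -/

/-- Self potentials conditioned on the configuration `x` at (copies of) the nodes of
`S`: the self potential of each copy `w` with `π w ∈ S` is multiplied by the indicator
`δ^{(x (π w))}`. -/
noncomputable def condPhi {W V 𝒳 : Type} (π : W → V) (Φ : W → 𝒳 → ℝ)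
    (S : Finset V) (x : V → 𝒳) : W → 𝒳 → ℝ :=
  fun w a => if π w ∈ S then (if a = x (π w) then Φ w a else 0) else Φ w a

/-- The BP message from `j` to `i` on the associated tree `T`, conditioned (via
indicator-modified self potentials) on the configuration `x` at the nodes of `S`. -/
noncomputable def condMsg {W V 𝒳 : Type} [Fintype W] [LinearOrder W] [Fintype 𝒳]
    (T : SimpleGraph W) (π : W → V) (Φ : W → 𝒳 → ℝ) (Ψ : W → W → 𝒳 → 𝒳 → ℝ)
    (x0 : 𝒳) (S : Finset V) (x : V → 𝒳) (j i : W) (xi : 𝒳) : ℝ :=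
  msg T (condPhi π Φ S x) Ψ x0 j i xi

/-- `Lside T π L a b` is `L_{a∖b}`: the loop cutset nodes *all of whose copies* lie in
the component `T_{a∖b}` of `T` minus the edge `{a,b}` containing `a`. -/
noncomputable def Lside {W V : Type} (T : SimpleGraph W) (π : W → V)
    (L : Finset V) (a b : W) : Finset V :=
  L.filter (fun l => ∀ w : W, π w = l → w ∈ compSet T a b)

/-- `Rset T π L a b` is the relevant set `R_{ab} = L ∖ (L_{a∖b} ∪ L_{b∖a})` of the edge
`{a,b}` of the associated tree. -/
noncomputable def Rset {W V : Type} [DecidableEq V] (T : SimpleGraph W) (π : W → V)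
    (L : Finset V) (a b : W) : Finset V :=
  L \ (Lside T π L a b ∪ Lside T π L b a)

/-- Overwrite the configuration `x : V → 𝒳` by the configuration `y` on `S`. -/
def patch {V 𝒳 : Type} [DecidableEq V] (x : V → 𝒳) (S : Finset V) (y : {v // v ∈ S} → 𝒳) : V → 𝒳 :=
  fun v => if h : v ∈ S then y ⟨v, h⟩ else x v

/-- The reduced message `m_{j→i}^{(x_{R_{ji}})}`: the sum of the fully conditioned
messages over all configurations of the upstream loop cutset nodes `L_{j∖i}` (the
remaining conditioning values being given by `x`). -/
noncomputable def redMsg {W V 𝒳 : Type} [Fintype W] [LinearOrder W] [Fintype 𝒳]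
    (T : SimpleGraph W) (π : W → V) (L : Finset V)
    (Φ : W → 𝒳 → ℝ) (Ψ : W → W → 𝒳 → 𝒳 → ℝ) (x0 : 𝒳)
    (j i : W) (x : V → 𝒳) (xi : 𝒳) : ℝ :=
  ∑ y : {v // v ∈ Lside T π L j i} → 𝒳,
    condMsg T π Φ Ψ x0 L (patch x (Lside T π L j i) y) j i xi

/-! Deleting an edge `{i, j}` of a tree leaves exactly two components, `T_{i∖j}` and `T_{j∖i}`,
because the edge is a bridge. Every copy `w ≠ i` of a cutset node lies in `T_{j∖i}` for some
neighbour `j` of `i`, and `T_{j∖i} ⊆ T_{i∖j'}` for every other neighbour `j'`. So a cutset node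
`l` with a copy `w ≠ i` is either in `L_{j∖i}` or, not lying in `L_{i∖j}` either, in `R_{i,j}`;
and `L_{j∖i} ⊆ L_{i∖j'}` keeps `L_{j∖i}` away from both `R_{i,j'}` and `L_{j'∖i}`. -/

open SimpleGraph Walk

section TreeComponents

variable {W : Type} {T : SimpleGraph W} {i j j' w : W}

lemma mem_compSet_iff_exists_walk :
    w ∈ compSet T i j ↔ ∃ p : T.Walk i w, s(i, j) ∉ p.edges :=
  reachable_deleteEdges_iff_exists_walk

lemma disjoint_compSet (hacyc : T.IsAcyclic) (h : T.Adj i j) :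
    Disjoint (compSet T i j) (compSet T j i) := by
  refine Set.disjoint_left.mpr fun w hi hj => isAcyclic_iff_forall_adj_isBridge.mp hacyc h ?_
  have hj' : (T.deleteEdges {s(i, j)}).Reachable j w := by rwa [Sym2.eq_swap]
  exact hi.trans hj'.symm

lemma compSet_subset_compSet (hacyc : T.IsAcyclic) (hj : T.Adj i j) (hne : j ≠ j') :
    compSet T j i ⊆ compSet T i j' := by
  intro w hw
  obtain ⟨p, hp⟩ := mem_compSet_iff_exists_walk.mp hw
  have hbridge := isBridge_iff_forall_walk_mem_edges.mp
    (isAcyclic_iff_forall_adj_isBridge.mp hacyc hj.symm)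
  -- a walk from `j` through `i` would reach `i` without the bridge `s(j, i)`
  have hp' : s(i, j') ∉ p.edges := fun he =>
    hp (p.edges_takeUntil_subset_edges _
      (hbridge (p.takeUntil i (p.fst_mem_support_of_mem_edges he))))
  refine mem_compSet_iff_exists_walk.mpr ⟨cons hj p, ?_⟩
  simp [hne.symm, hj.ne, hp']

lemma exists_adj_mem_compSet (hw : T.Reachable i w) (hne : w ≠ i) :
    ∃ j, T.Adj i j ∧ w ∈ compSet T j i := by
  obtain ⟨p, hp⟩ := hw.exists_isPath
  cases p with
  | nil => exact absurd rfl hne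
  | cons h q =>
    refine ⟨_, h, mem_compSet_iff_exists_walk.mpr ⟨q, fun he => ?_⟩⟩
    exact ((cons_isPath_iff _ _).mp hp).2 (q.snd_mem_support_of_mem_edges he)

end TreeComponents

section CutsetPartition

variable {W V : Type} {T : SimpleGraph W} {π : W → V} {L : Finset V} {i j j' : W}

lemma Lside_subset (a b : W) : Lside T π L a b ⊆ L :=
  Finset.filter_subset _ _

lemma mem_compSet_of_mem_Lside {a b w : W} {l : V} (hl : l ∈ Lside T π L a b) (hw : π w = l) :
    w ∈ compSet T a b :=
  (Finset.mem_filter.mp hl).2 w hw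

lemma Lside_subset_Lside (hacyc : T.IsAcyclic) (hj : T.Adj i j) (hne : j ≠ j') :
    Lside T π L j i ⊆ Lside T π L i j' :=
  Finset.monotone_filter_right L fun _ _ hl w hw => compSet_subset_compSet hacyc hj hne (hl w hw)

lemma disjoint_Lside (hacyc : T.IsAcyclic) (hj : T.Adj i j) (hj' : T.Adj i j') (hne : j ≠ j')
    (hL : ∀ l ∈ L, ∃ w, π w = l) :
    Disjoint (Lside T π L j i) (Lside T π L j' i) := by
  refine Finset.disjoint_left.mpr fun l hl hl' => ?_
  obtain ⟨w, hw⟩ := hL l (Lside_subset j i hl)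
  exact Set.disjoint_left.mp (disjoint_compSet hacyc hj')
    (mem_compSet_of_mem_Lside (Lside_subset_Lside hacyc hj hne hl) hw)
    (mem_compSet_of_mem_Lside hl' hw)

lemma disjoint_Rset_Lside [DecidableEq V] (hacyc : T.IsAcyclic) (hj : T.Adj i j) (j' : W) :
    Disjoint (Rset T π L i j') (Lside T π L j i) := by
  refine Finset.disjoint_of_subset_right ?_ Finset.sdiff_disjoint
  by_cases hne : j = j'
  · exact hne ▸ Finset.subset_union_right
  · exact (Lside_subset_Lside hacyc hj hne).trans Finset.subset_union_left

lemma exists_mem_Rset_or_mem_Lside [DecidableEq V] (hacyc : T.IsAcyclic) {l : V} (hl : l ∈ L)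
    {w : W} (hw : π w = l) (hwi : w ≠ i) (hreach : T.Reachable i w) :
    ∃ j, T.Adj i j ∧ (l ∈ Rset T π L i j ∨ l ∈ Lside T π L j i) := by
  obtain ⟨j, hj, hwj⟩ := exists_adj_mem_compSet hreach hwi
  have hl_not : l ∉ Lside T π L i j := fun h =>
    Set.disjoint_left.mp (disjoint_compSet hacyc hj) (mem_compSet_of_mem_Lside h hw) hwj
  refine ⟨j, hj, ?_⟩
  by_cases hL : l ∈ Lside T π L j i
  · exact .inr hL
  · exact .inl (by simp [Rset, hl, hl_not, hL])

end CutsetPartition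

theorem cutset_partition_at_node_general
    {W V : Type} [Fintype W] [DecidableEq V]
    (T : SimpleGraph W) (hconn : T.Connected) (hacyc : T.IsAcyclic)
    (π : W → V) (L : Finset V)
    (hcopies : ∀ l ∈ L, ∃ w w' : W, w ≠ w' ∧ π w = l ∧ π w' = l)
    (i : W) :
    L = (T.neighborFinset i).biUnion (fun j => Rset T π L i j) ∪
          (T.neighborFinset i).biUnion (fun j => Lside T π L j i) ∧
      (∀ j ∈ T.neighborFinset i,
        Disjoint ((T.neighborFinset i).biUnion (fun j' => Rset T π L i j'))
          (Lside T π L j i)) ∧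
      (∀ j ∈ T.neighborFinset i, ∀ j' ∈ T.neighborFinset i, j ≠ j' →
        Disjoint (Lside T π L j i) (Lside T π L j' i)) := by
  refine ⟨?_, fun j hj => ?_, fun j hj j' hj' hne => ?_⟩
  · refine subset_antisymm (fun l hl => ?_) (Finset.union_subset
      (Finset.biUnion_subset.mpr fun _ _ => Finset.sdiff_subset)
      (Finset.biUnion_subset.mpr fun j _ => Lside_subset j i))
    obtain ⟨w, w', hww', hw, hw'⟩ := hcopies l hl
    obtain ⟨v, hv, hvi⟩ : ∃ v, π v = l ∧ v ≠ i :=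
      if h : w = i then ⟨w', hw', h ▸ hww'.symm⟩ else ⟨w, hw, h⟩
    obtain ⟨j, hj, hR | hL⟩ :=
      exists_mem_Rset_or_mem_Lside hacyc hl hv hvi (hconn.preconnected i v)
    · exact Finset.mem_union_left _ (Finset.mem_biUnion.mpr ⟨j, by simpa using hj, hR⟩)
    · exact Finset.mem_union_right _ (Finset.mem_biUnion.mpr ⟨j, by simpa using hj, hL⟩)
  · exact (Finset.disjoint_biUnion_left _ _ _).mpr fun j' _ =>
      disjoint_Rset_Lside hacyc ((T.mem_neighborFinset i j).mp hj) j'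
  · refine disjoint_Lside hacyc ((T.mem_neighborFinset i j).mp hj)
      ((T.mem_neighborFinset i j').mp hj') hne fun l hl => ?_
    obtain ⟨w, -, -, hw, -⟩ := hcopies l hl
    exact ⟨w, hw⟩

/-- For a node `i` of the associated tree `T` (each loop cutset node
having been split into at least two copies), the loop cutset `L` is partitioned into
the disjoint union of the relevant set `R_i = ⋃_{j∈∂i} R_{i,j}` and the upstream sets
`L_{j∖i}`, `j ∈ ∂i`. -/
theorem cutset_partition_at_node
    {W V 𝒳 : Type} [Fintype W] [LinearOrder W] [Fintype V] [DecidableEq V]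
    (T : SimpleGraph W) (hconn : T.Connected) (hacyc : T.IsAcyclic)
    (π : W → V) (L : Finset V)
    (hcopies : ∀ l ∈ L, ∃ w w' : W, w ≠ w' ∧ π w = l ∧ π w' = l)
    (i : W) :
    L = (T.neighborFinset i).biUnion (fun j => Rset T π L i j) ∪
          (T.neighborFinset i).biUnion (fun j => Lside T π L j i) ∧
      (∀ j ∈ T.neighborFinset i,
        Disjoint ((T.neighborFinset i).biUnion (fun j' => Rset T π L i j'))
          (Lside T π L j i)) ∧
      (∀ j ∈ T.neighborFinset i, ∀ j' ∈ T.neighborFinset i, j ≠ j' →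
        Disjoint (Lside T π L j i) (Lside T π L j' i)) :=
  cutset_partition_at_node_general T hconn hacyc π L hcopies i
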